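/- arXiv:2310.10243 — 3 statements merged into one kernel-verified Lean document; each statement's English description precedes it below -/
import Mathlib

section
/- Let R be a finite group, S ⊆ R, and let K, H be subgroups with 1 < K, K normal in H, H < R, and K·(S \ H) = S \ H = (S \ H)·K. Then the automorphism group of the Cayley digraph Cay(R,S) is strictly larger than the right regular representation of R; i.e., Cay(R,S) is not a digraphical regular representation. -/
/-!
Pick `1 ≠ k ∈ K` and let `f` multiply by `k` on the right on `H` while fixing every point
outside `H`. Arcs inside `H` are preserved because right multiplication is an automorphism, and
arcs outside `H` are untouched. An arc between `x ∈ H` and `y ∉ H` has label `x * y⁻¹ ∉ H`, and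
`f` changes it to `(x * k * x⁻¹) * (x * y⁻¹)` or to `(x * y⁻¹) * (y * k⁻¹ * y⁻¹)`; normality of
`K` in `H` puts the conjugate in `K`, and `S \ H` is a union of `K`-cosets on both sides. As `f`
fixes a point outside `H` but moves `1`, it is not a right translation.
-/

open scoped Pointwise

section CosetUnion

variable {R : Type*} [Group R] {S : Set R} {K H : Subgroup R}

lemma mem_iff_mul_left_mem_of_not_mem (hKH : K ≤ H)
    (h1 : (K : Set R) * (S \ (H : Set R)) = S \ (H : Set R))
    {κ a : R} (hκ : κ ∈ K) (ha : a ∉ H) : a ∈ S ↔ κ * a ∈ S := by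
  have hκa : κ * a ∉ H := fun hm => ha <| by
    simpa using H.mul_mem (H.inv_mem (hKH hκ)) hm
  constructor
  · intro h
    exact (h1 ▸ Set.mul_mem_mul hκ ⟨h, ha⟩ : κ * a ∈ S \ (H : Set R)).1
  · intro h
    simpa using (h1 ▸ Set.mul_mem_mul (K.inv_mem hκ) ⟨h, hκa⟩ : κ⁻¹ * (κ * a) ∈ S \ (H : Set R)).1

lemma mem_iff_mul_right_mem_of_not_mem (hKH : K ≤ H)
    (h2 : (S \ (H : Set R)) * (K : Set R) = S \ (H : Set R))
    {κ a : R} (hκ : κ ∈ K) (ha : a ∉ H) : a ∈ S ↔ a * κ ∈ S := by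
  have hκa : a * κ ∉ H := fun hm => ha <| by
    simpa using H.mul_mem hm (H.inv_mem (hKH hκ))
  constructor
  · intro h
    exact (h2 ▸ Set.mul_mem_mul ⟨h, ha⟩ hκ : a * κ ∈ S \ (H : Set R)).1
  · intro h
    simpa using (h2 ▸ Set.mul_mem_mul ⟨h, hκa⟩ (K.inv_mem hκ) : a * κ * κ⁻¹ ∈ S \ (H : Set R)).1

end CosetUnion

section RightMulOn

variable {R : Type*} [Group R] (H : Subgroup R) [DecidablePred (· ∈ H)]

def rightMulOn (k : H) : Equiv.Perm R :=
  Equiv.Perm.ofSubtype (Equiv.mulRight k)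

variable {H}

lemma rightMulOn_apply_of_mem (k : H) {v : R} (hv : v ∈ H) : rightMulOn H k v = v * k :=
  Equiv.Perm.ofSubtype_apply_of_mem _ hv

lemma rightMulOn_apply_of_not_mem (k : H) {v : R} (hv : v ∉ H) : rightMulOn H k v = v :=
  Equiv.Perm.ofSubtype_apply_of_not_mem _ hv

lemma rightMulOn_ne_mul_right {k : H} (hk : k ≠ 1) (hH : H < ⊤) :
    ¬ ∃ r : R, ∀ v : R, rightMulOn H k v = v * r := by
  rintro ⟨r, hr⟩
  obtain ⟨y, -, hy⟩ := SetLike.exists_of_lt hH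
  have hkr : (k : R) = r := by simpa [rightMulOn_apply_of_mem k H.one_mem] using hr 1
  have hr1 : r = 1 := by simpa [rightMulOn_apply_of_not_mem k hy] using hr y
  exact hk (Subtype.ext (hkr.trans hr1))

lemma rightMulOn_mem_iff {S : Set R} {K : Subgroup R} (hKH : K ≤ H)
    (hnorm : ∀ h ∈ H, ∀ k ∈ K, h * k * h⁻¹ ∈ K)
    (h1 : (K : Set R) * (S \ (H : Set R)) = S \ (H : Set R))
    (h2 : (S \ (H : Set R)) * (K : Set R) = S \ (H : Set R))
    {k : H} (hk : (k : R) ∈ K) (x y : R) :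
    x * y⁻¹ ∈ S ↔ rightMulOn H k x * (rightMulOn H k y)⁻¹ ∈ S := by
  by_cases hx : x ∈ H <;> by_cases hy : y ∈ H
  · rw [rightMulOn_apply_of_mem k hx, rightMulOn_apply_of_mem k hy]
    group
  · have hxy : x * y⁻¹ ∉ H := fun hm => hy <| by
      simpa using H.inv_mem (H.mul_mem (H.inv_mem hx) hm)
    rw [rightMulOn_apply_of_mem k hx, rightMulOn_apply_of_not_mem k hy,
      mem_iff_mul_left_mem_of_not_mem hKH h1 (hnorm x hx k hk) hxy]
    group
  · have hxy : x * y⁻¹ ∉ H := fun hm => hx <| by simpa using H.mul_mem hm hy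
    rw [rightMulOn_apply_of_not_mem k hx, rightMulOn_apply_of_mem k hy,
      mem_iff_mul_right_mem_of_not_mem hKH h2 (hnorm y hy _ (K.inv_mem hk)) hxy]
    group
  · rw [rightMulOn_apply_of_not_mem k hx, rightMulOn_apply_of_not_mem k hy]

end RightMulOn

theorem stmt1_general {R : Type*} [Group R] (S : Set R) (K H : Subgroup R)
    (hK : ⊥ < K) (hKH : K ≤ H)
    (hnorm : ∀ h ∈ H, ∀ k ∈ K, h * k * h⁻¹ ∈ K)
    (hH : H < ⊤)
    (h1 : (K : Set R) * (S \ (H : Set R)) = S \ (H : Set R))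
    (h2 : (S \ (H : Set R)) * (K : Set R) = S \ (H : Set R)) :
    ∃ f : Equiv.Perm R,
      (∀ x y : R, x * y⁻¹ ∈ S ↔ f x * (f y)⁻¹ ∈ S) ∧
      ¬ ∃ r : R, ∀ v : R, f v = v * r := by
  classical
  obtain ⟨k, hkK, hk1⟩ := SetLike.exists_of_lt hK
  let k' : H := ⟨k, hKH hkK⟩
  have hk' : k' ≠ 1 := fun h => hk1 (by simpa [k'] using congrArg Subtype.val h)
  exact ⟨rightMulOn H k', rightMulOn_mem_iff hKH hnorm h1 h2 hkK, rightMulOn_ne_mul_right hk' hH⟩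

/-- A Cayley digraph that is a nontrivial generalised wreath product is not
a DRR: its automorphism group is strictly larger than the right regular representation. -/
theorem stmt1 {R : Type*} [Group R] [Finite R] (S : Set R) (K H : Subgroup R)
    (hK : ⊥ < K) (hKH : K ≤ H)
    (hnorm : ∀ h ∈ H, ∀ k ∈ K, h * k * h⁻¹ ∈ K)
    (hH : H < ⊤)
    (h1 : (K : Set R) * (S \ (H : Set R)) = S \ (H : Set R))
    (h2 : (S \ (H : Set R)) * (K : Set R) = S \ (H : Set R)) :
    ∃ f : Equiv.Perm R,
      (∀ x y : R, x * y⁻¹ ∈ S ↔ f x * (f y)⁻¹ ∈ S) ∧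
      ¬ ∃ r : R, ∀ v : R, f v = v * r :=
  stmt1_general S K H hK hKH hnorm hH h1 h2
end

section
/- Let R be a nonabelian group whose order is a product of two distinct primes, and let S ⊆ R. If Cay(R,S) is a nontrivial generalised wreath product with respect to some subgroups K and H (1 < K ⊴ H < R, K(S\H) = S\H = (S\H)K), then there exists a nontrivial automorphism of R fixing S setwise. -/
/-!
The center of a nonabelian group `R` of order `pq` is trivial, since `R ⧸ Z(R)` would otherwise
have order `1`, `p` or `q` and be cyclic. A proper nontrivial subgroup `H` has prime order, so it is
abelian and `K ≤ H` centralizes `H`. Conjugation by `k ∈ K` therefore fixes `S ∩ H` pointwise, and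
it maps `S \ H` into itself because `S \ H` is a union of double cosets `K s K`. For `k ≠ 1` this
inner automorphism is nontrivial because `k` is not central.
-/

open scoped Pointwise

lemma Nat.eq_one_or_prime_of_dvd_mul_of_ne {p q m : ℕ} (hp : p.Prime) (hq : q.Prime)
    (hdvd : m ∣ p * q) (hne : m ≠ p * q) : m = 1 ∨ m.Prime := by
  obtain ⟨a, b, ha, hb, rfl⟩ := Nat.dvd_mul.mp hdvd
  rcases (Nat.dvd_prime hp).mp ha with rfl | rfl <;>
    rcases (Nat.dvd_prime hq).mp hb with rfl | rfl <;> simp_all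

lemma isCyclic_of_card_eq_one_or_prime {G : Type*} [Group G]
    (h : Nat.card G = 1 ∨ (Nat.card G).Prime) : IsCyclic G := by
  rcases h with h | h
  · have := (Nat.card_eq_one_iff_unique.mp h).1
    infer_instance
  · have := Fact.mk h
    exact isCyclic_of_prime_card rfl

namespace Subgroup

variable {G : Type*} [Group G] {p q : ℕ}

lemma center_eq_bot_of_card_eq_prime_mul_prime (hp : p.Prime) (hq : q.Prime)
    (hcard : Nat.card G = p * q) (hG : ¬ ∀ a b : G, a * b = b * a) : center G = ⊥ := by
  by_contra hZ
  have hne : (center G).index ≠ p * q := by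
    intro h
    have hmul := card_mul_index (center G)
    rw [h, hcard] at hmul
    exact hZ (card_eq_one.mp ((mul_eq_right₀ (Nat.mul_pos hp.pos hq.pos).ne').mp hmul))
  have : IsCyclic (G ⧸ center G) := isCyclic_of_card_eq_one_or_prime <| index_eq_card (center G) ▸
    Nat.eq_one_or_prime_of_dvd_mul_of_ne hp hq (hcard ▸ index_dvd_card _) hne
  exact hG (isMulCommutative_of_isCyclic_quotient_center_self (G := G)).is_comm.comm

lemma card_prime_of_card_eq_prime_mul_prime [Finite G] (hp : p.Prime) (hq : q.Prime)
    (hcard : Nat.card G = p * q) {H : Subgroup G} (hbot : H ≠ ⊥) (htop : H ≠ ⊤) :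
    (Nat.card H).Prime := by
  refine (Nat.eq_one_or_prime_of_dvd_mul_of_ne hp hq (hcard ▸ card_subgroup_dvd_card H)
    fun h ↦ htop ((card_eq_iff_eq_top H).mp (h.trans hcard.symm))).resolve_left ?_
  exact fun h ↦ hbot (card_eq_one.mp h)

end Subgroup

section ConjInvariant

variable {G : Type*} [Group G] {S : Set G}

lemma conj_mem_of_mul_diff_eq {K H : Subgroup G} (hKH : K ≤ Subgroup.centralizer H)
    (h1 : (K : Set G) * (S \ (H : Set G)) = S \ (H : Set G))
    (h2 : (S \ (H : Set G)) * (K : Set G) = S \ (H : Set G))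
    {k s : G} (hk : k ∈ K) (hs : s ∈ S) : k * s * k⁻¹ ∈ S := by
  by_cases hsH : s ∈ H
  · rwa [← Subgroup.mem_centralizer_iff.mp (hKH hk) s hsH, mul_inv_cancel_right]
  · have hks : k * s ∈ S \ (H : Set G) := h1 ▸ Set.mul_mem_mul hk ⟨hs, hsH⟩
    exact (h2 ▸ Set.mul_mem_mul hks (K.inv_mem hk) : k * s * k⁻¹ ∈ S \ (H : Set G)).1

lemma MulAut.conj_image_eq_of_forall_conj_mem {K : Subgroup G}
    (hS : ∀ k ∈ K, ∀ s ∈ S, k * s * k⁻¹ ∈ S) {k : G} (hk : k ∈ K) : MulAut.conj k '' S = S := by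
  refine subset_antisymm ?_ fun s hs ↦ ⟨k⁻¹ * s * k, ?_, ?_⟩
  · rintro _ ⟨s, hs, rfl⟩
    exact hS k hk s hs
  · simpa using hS k⁻¹ (K.inv_mem hk) s hs
  · simp [mul_assoc]

end ConjInvariant

lemma MulAut.conj_eq_one_iff {G : Type*} [Group G] {g : G} :
    MulAut.conj g = 1 ↔ g ∈ Subgroup.center G := by
  simp only [Subgroup.mem_center_iff, MulEquiv.ext_iff, MulAut.conj_apply, MulAut.one_apply,
    mul_inv_eq_iff_eq_mul]
  exact forall_congr' fun x ↦ eq_comm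

theorem stmt5_general {R : Type*} [Group R] [Finite R] (p q : ℕ)
    (hp : p.Prime) (hq : q.Prime)
    (hcard : Nat.card R = p * q)
    (hnab : ¬ ∀ a b : R, a * b = b * a)
    (S : Set R) (K H : Subgroup R)
    (hK : ⊥ < K) (hKH : K ≤ H)
    (hH : H < ⊤)
    (h1 : (K : Set R) * (S \ (H : Set R)) = S \ (H : Set R))
    (h2 : (S \ (H : Set R)) * (K : Set R) = S \ (H : Set R)) :
    ∃ φ : MulAut R, φ ≠ 1 ∧ φ '' S = S := by
  have hZ := Subgroup.center_eq_bot_of_card_eq_prime_mul_prime hp hq hcard hnab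
  have := Fact.mk <| Subgroup.card_prime_of_card_eq_prime_mul_prime hp hq hcard
    (ne_bot_of_le_ne_bot hK.ne' hKH) hH.ne
  have : IsCyclic H := isCyclic_of_prime_card rfl
  have hKcent : K ≤ Subgroup.centralizer H := hKH.trans (Subgroup.le_centralizer H)
  obtain ⟨k, hkK, hk1⟩ := K.bot_or_exists_ne_one.resolve_left hK.ne'
  refine ⟨MulAut.conj k, ?_, MulAut.conj_image_eq_of_forall_conj_mem
    (fun k hk s hs ↦ conj_mem_of_mul_diff_eq hKcent h1 h2 hk hs) hkK⟩
  rw [Ne, MulAut.conj_eq_one_iff, hZ, Subgroup.mem_bot]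
  exact hk1

/-- for a nonabelian group of order `pq` (`p ≠ q` primes), a nontrivial
generalised wreath product `Cay(R,S)` admits a nontrivial automorphism of `R` fixing `S`. -/
theorem stmt5 {R : Type*} [Group R] [Finite R] (p q : ℕ)
    (hp : p.Prime) (hq : q.Prime) (hpq : p ≠ q)
    (hcard : Nat.card R = p * q)
    (hnab : ¬ ∀ a b : R, a * b = b * a)
    (S : Set R) (K H : Subgroup R)
    (hK : ⊥ < K) (hKH : K ≤ H)
    (hnorm : ∀ h ∈ H, ∀ k ∈ K, h * k * h⁻¹ ∈ K)
    (hH : H < ⊤)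
    (h1 : (K : Set R) * (S \ (H : Set R)) = S \ (H : Set R))
    (h2 : (S \ (H : Set R)) * (K : Set R) = S \ (H : Set R)) :
    ∃ φ : MulAut R, φ ≠ 1 ∧ φ '' S = S :=
  stmt5_general p q hp hq hcard hnab S K H hK hKH hH h1 h2
end

section
/- Let R be a group of squarefree order that is either abelian of composite order, or isomorphic to D_{2r} × C_q with r ∈ {3,5} and q a prime not dividing 2r. Then R is not DRR-detecting. -/
/-!
Both kinds of group are products `A × B` of groups of coprime orders with `B` cyclic. For
`S = (T × B) ∪ U` and `c : A → B` invariant under left multiplication by the first coordinates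
of `U`, the shear `(a, b) ↦ (a, b * c a)` is an automorphism of `Cay(A × B, S)`: an arc whose
`A`-part lies in `T` does not see the `B`-coordinate, and the two ends of any other arc of `S`
have the same value of `c`. The shear is a right translation only when `c` is constant.

Since the orders are coprime, every automorphism of `A × B` maps `A × 1` and `1 × B` into
themselves, and then element orders force an automorphism stabilizing `S` to fix a generating
set. For `R` abelian, `R` is cyclic of order `M * K` with `M, K > 1` coprime, and we take
`T = {a}`, `U = {(1, b)}` for generators `a`, `b`; for `D_n × C_q` we take `T = {sr 0}` and
`U = {(r 1, 1), (r 1, w)}` for a generator `w` of `C_q`.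
-/

open DihedralGroup

section DRR

variable {R P : Type*} [Group R] [Group P]

/-- `f` is an automorphism of the Cayley digraph `Cay(R, S)`, with an arc from `y` to `x` when
`x * y⁻¹ ∈ S`. -/
def IsCayleyAut (S : Set R) (f : Equiv.Perm R) : Prop :=
  ∀ x y : R, x * y⁻¹ ∈ S ↔ f x * (f y)⁻¹ ∈ S

def HasTrivialAutStabilizer (S : Set R) : Prop :=
  ∀ φ : MulAut R, φ '' S = S → φ = 1

/-- Since `Aut(Cay(R, S))` contains the right translations, it is regular iff it consists of
them. -/
def IsDRRDetecting (R : Type*) [Group R] : Prop :=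
  ∀ S : Set R, HasTrivialAutStabilizer S → ∀ f : Equiv.Perm R, IsCayleyAut S f →
    ∃ r : R, ∀ v, f v = v * r

theorem HasTrivialAutStabilizer.image (e : R ≃* P) {S : Set R} (hS : HasTrivialAutStabilizer S) :
    HasTrivialAutStabilizer (e '' S) := by
  intro ψ hψ
  have h : e.trans (ψ.trans e.symm) = 1 := hS _ <| by
    simp only [MulEquiv.coe_trans, Set.image_comp, hψ]
    exact e.symm.toEquiv.image_symm_image S
  ext x
  simpa using congr(e ($h (e.symm x)))

theorem IsCayleyAut.conj (e : R ≃* P) {S : Set R} {f : Equiv.Perm R} (hf : IsCayleyAut S f) :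
    IsCayleyAut (e '' S) (e.symm.toEquiv.trans (f.trans e.toEquiv)) := by
  intro x y
  rw [show ⇑e '' S = e.symm ⁻¹' S from e.toEquiv.image_eq_preimage_symm S]
  simpa [← map_inv, ← map_mul] using hf (e.symm x) (e.symm y)

theorem IsDRRDetecting.of_mulEquiv (e : R ≃* P) (h : IsDRRDetecting P) : IsDRRDetecting R := by
  intro S hS f hf
  obtain ⟨r, hr⟩ := h _ (hS.image e) _ (hf.conj e)
  exact ⟨e.symm r, fun v => e.injective (by simpa using hr (e v))⟩

end DRR

section Shear

variable {A B : Type*} [Group B]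

def mulRightShear (c : A → B) : Equiv.Perm (A × B) :=
  Equiv.prodShear (Equiv.refl A) fun a => Equiv.mulRight (c a)

@[simp]
theorem mulRightShear_apply (c : A → B) (p : A × B) : mulRightShear c p = (p.1, p.2 * c p.1) :=
  rfl

theorem isCayleyAut_mulRightShear [Group A] {T : Set A} {U : Set (A × B)} {c : A → B}
    (hc : ∀ u ∈ U, ∀ g, c (u.1 * g) = c g) :
    IsCayleyAut (Prod.fst ⁻¹' T ∪ U) (mulRightShear c) := by
  rintro ⟨g, b⟩ ⟨g', b'⟩
  by_cases hcg : c g = c g'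
  · simp [hcg, mul_assoc]
  · have hU : ∀ z, (g * g'⁻¹, z) ∉ U := fun z hz => hcg (by simpa using hc _ hz g')
    simp [hU]

theorem exists_mulRightShear_eq_mul_iff [Group A] {c : A → B} :
    (∃ r, ∀ v, mulRightShear c v = v * r) ↔ ∀ a, c a = c 1 := by
  constructor
  · rintro ⟨r, hr⟩ a
    have h1 := hr 1
    have ha := hr (a, 1)
    simp_all [Prod.ext_iff]
  · intro h
    exact ⟨(1, c 1), fun v => by simp [h, Prod.ext_iff]⟩

theorem not_isDRRDetecting_prod [Group A] {T : Set A} {U : Set (A × B)}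
    (hS : HasTrivialAutStabilizer (Prod.fst ⁻¹' T ∪ U)) {c : A → B}
    (hc : ∀ u ∈ U, ∀ g, c (u.1 * g) = c g) {a : A} (ha : c a ≠ c 1) :
    ¬ IsDRRDetecting (A × B) := fun h =>
  ha (exists_mulRightShear_eq_mul_iff.mp (h _ hS _ (isCayleyAut_mulRightShear hc)) a)

end Shear

theorem MonoidHom.eq_one_of_coprime_natCard {G H : Type*} [Group G] [Group H] (f : G →* H)
    (h : (Nat.card G).Coprime (Nat.card H)) (x : G) : f x = 1 :=
  orderOf_eq_one_iff.mp <| Nat.eq_one_of_dvd_coprimes h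
    ((orderOf_map_dvd f x).trans (orderOf_dvd_natCard x)) (orderOf_dvd_natCard (f x))

theorem Subgroup.closure_image_inl_union_image_inr {G N : Type*} [Group G] [Group N]
    {s : Set G} {t : Set N} (hs : closure s = ⊤) (ht : closure t = ⊤) :
    closure (MonoidHom.inl G N '' s ∪ MonoidHom.inr G N '' t) = ⊤ := by
  rw [eq_top_iff, ← top_prod_top, prod_le_iff, ← hs, ← ht, MonoidHom.map_closure,
    MonoidHom.map_closure]
  exact ⟨closure_mono Set.subset_union_left, closure_mono Set.subset_union_right⟩

theorem MulAut.eq_one_of_forall_mem_closure {G : Type*} [Group G] {s : Set G}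
    (hs : Subgroup.closure s = ⊤) {φ : MulAut G} (h : ∀ x ∈ s, φ x = x) : φ = 1 := by
  have hφ := MonoidHom.eq_of_eqOn_dense hs (f := φ.toMonoidHom) (g := MonoidHom.id G) h
  ext x
  exact congr($hφ x)

theorem DihedralGroup.closure_r_one_sr_zero {n : ℕ} :
    Subgroup.closure {r 1, sr 0} = (⊤ : Subgroup (DihedralGroup n)) := by
  have hr : ∀ i : ZMod n, r i ∈ Subgroup.closure {r 1, sr 0} := fun i => by
    obtain ⟨k, rfl⟩ := ZMod.intCast_surjective i
    rw [← r_one_zpow]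
    exact Subgroup.zpow_mem _ (Subgroup.subset_closure (by simp)) k
  rw [eq_top_iff]
  rintro (i | i) -
  · exact hr i
  · rw [show sr i = sr 0 * r i by simp]
    exact mul_mem (Subgroup.subset_closure (by simp)) (hr i)

section Coprime

variable {A B : Type*} [Group A] [Group B]

theorem MulAut.snd_apply_mk_one (hAB : (Nat.card A).Coprime (Nat.card B)) (φ : MulAut (A × B))
    (x : A) : (φ (x, 1)).2 = 1 :=
  ((MonoidHom.snd A B).comp (φ.toMonoidHom.comp (MonoidHom.inl A B))).eq_one_of_coprime_natCard
    hAB x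

theorem MulAut.fst_apply_one_mk (hAB : (Nat.card A).Coprime (Nat.card B)) (φ : MulAut (A × B))
    (y : B) : (φ (1, y)).1 = 1 :=
  ((MonoidHom.fst A B).comp (φ.toMonoidHom.comp (MonoidHom.inr A B))).eq_one_of_coprime_natCard
    hAB.symm y

theorem not_isDRRDetecting_prod_of_isCyclic [IsCyclic A] [IsCyclic B]
    [Nontrivial A] [Nontrivial B] (hAB : (Nat.card A).Coprime (Nat.card B)) :
    ¬ IsDRRDetecting (A × B) := by
  classical
  obtain ⟨a, ha⟩ := isCyclic_iff_exists_zpowers_eq_top.mp ‹IsCyclic A›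
  obtain ⟨b, hb⟩ := isCyclic_iff_exists_zpowers_eq_top.mp ‹IsCyclic B›
  have ha1 : a ≠ 1 := by
    rintro rfl
    exact bot_ne_top (Subgroup.zpowers_one_eq_bot.symm.trans ha)
  have hb1 : b ≠ 1 := by
    rintro rfl
    exact bot_ne_top (Subgroup.zpowers_one_eq_bot.symm.trans hb)
  refine not_isDRRDetecting_prod (T := {a}) (U := {(1, b)}) (c := fun x => if x = 1 then 1 else b)
    (a := a) ?_ (by simp) (by simpa [ha1] using hb1)
  intro φ hφ
  have hmem : ∀ p : A × B, p.1 = a ∨ p = (1, b) → (φ p).1 = a ∨ φ p = (1, b) :=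
    fun p hp => hφ.subset (Set.mem_image_of_mem φ hp)
  refine MulAut.eq_one_of_forall_mem_closure (Subgroup.closure_image_inl_union_image_inr
    (s := {a}) (t := {b}) (by rw [← ha, Subgroup.zpowers_eq_closure])
    (by rw [← hb, Subgroup.zpowers_eq_closure])) ?_
  simp only [Set.image_singleton, Set.singleton_union, Set.mem_insert_iff, Set.mem_singleton_iff,
    forall_eq_or_imp, forall_eq, MonoidHom.inl_apply, MonoidHom.inr_apply]
  constructor
  · rcases hmem (a, 1) (by simp) with h | h
    · exact Prod.ext h (MulAut.snd_apply_mk_one hAB φ a)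
    · exact absurd (by simpa [h] using MulAut.snd_apply_mk_one hAB φ a) hb1
  · rcases hmem (1, b) (by simp) with h | h
    · exact absurd (by simpa [h] using MulAut.fst_apply_one_mk hAB φ b) ha1
    · exact h

theorem not_isDRRDetecting_dihedralGroup_prod {n : ℕ} [IsCyclic B] [Nontrivial B] (hn : n ≠ 2)
    (hB : (2 * n).Coprime (Nat.card B)) : ¬ IsDRRDetecting (DihedralGroup n × B) := by
  obtain ⟨w, hw⟩ := isCyclic_iff_exists_zpowers_eq_top.mp ‹IsCyclic B›
  have hw1 : w ≠ 1 := by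
    rintro rfl
    exact bot_ne_top (Subgroup.zpowers_one_eq_bot.symm.trans hw)
  have hAB : (Nat.card (DihedralGroup n)).Coprime (Nat.card B) := by rwa [DihedralGroup.nat_card]
  let c : DihedralGroup n → B := fun | r _ => 1 | sr _ => w
  refine not_isDRRDetecting_prod (T := {sr 0}) (U := {(r 1, 1), (r 1, w)}) (c := c) (a := sr 0)
    ?_ (by rintro u (rfl | rfl) (i | i) <;> rfl) hw1
  intro φ hφ
  have hmem : ∀ p : DihedralGroup n × B, p.1 = sr 0 ∨ p = (r 1, 1) ∨ p = (r 1, w) →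
      (φ p).1 = sr 0 ∨ φ p = (r 1, 1) ∨ φ p = (r 1, w) :=
    fun p hp => hφ.subset (Set.mem_image_of_mem φ hp)
  have hord_sr : orderOf (φ (sr 0, 1)) = 2 := by
    simp [MulEquiv.orderOf_eq, Prod.orderOf, orderOf_sr]
  have hord_r : orderOf (φ (r 1, 1)) = n := by
    simp [MulEquiv.orderOf_eq, Prod.orderOf, orderOf_r_one]
  have hs : φ (sr 0, 1) = (sr 0, 1) := by
    rcases hmem (sr 0, 1) (Or.inl rfl) with h | h | h
    · exact Prod.ext h (MulAut.snd_apply_mk_one hAB φ _)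
    · exact absurd (by simpa [h, Prod.orderOf, orderOf_r_one] using hord_sr) hn
    · exact absurd (by simpa [h] using MulAut.snd_apply_mk_one hAB φ (sr 0)) hw1
  have hr : φ (r 1, 1) = (r 1, 1) := by
    rcases hmem (r 1, 1) (by simp) with h | h | h
    · have h' : φ (r 1, 1) = (sr 0, 1) := Prod.ext h (MulAut.snd_apply_mk_one hAB φ _)
      exact absurd (by simpa [h', Prod.orderOf, orderOf_sr] using hord_r.symm) hn
    · exact h
    · exact absurd (by simpa [h] using MulAut.snd_apply_mk_one hAB φ (r 1)) hw1
  have hw' : φ (1, w) = (1, w) := by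
    have hprod : φ (r 1, w) = (r 1, (φ (1, w)).2) := by
      rw [show ((r 1, w) : DihedralGroup n × B) = (r 1, 1) * (1, w) by simp, map_mul, hr]
      ext <;> simp [MulAut.fst_apply_one_mk hAB φ w]
    rcases hmem (r 1, w) (by simp) with h | h | h
    · simp [hprod] at h
    · refine absurd ?_ hw1
      have h1 : φ (1, w) = 1 :=
        Prod.ext (MulAut.fst_apply_one_mk hAB φ w) (by simpa [hprod] using h)
      simpa using h1
    · exact Prod.ext (MulAut.fst_apply_one_mk hAB φ w) (by simpa [hprod] using h)
  refine MulAut.eq_one_of_forall_mem_closure (Subgroup.closure_image_inl_union_image_inr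
    (s := {r 1, sr 0}) (t := {w}) DihedralGroup.closure_r_one_sr_zero
    (by rw [← hw, Subgroup.zpowers_eq_closure])) ?_
  simp only [Set.image_insert_eq, Set.image_singleton, Set.insert_union, Set.singleton_union,
    Set.mem_insert_iff, Set.mem_singleton_iff, forall_eq_or_imp, forall_eq, MonoidHom.inl_apply,
    MonoidHom.inr_apply]
  exact ⟨hr, hs, hw'⟩

end Coprime

theorem Nat.exists_coprime_mul_eq_of_squarefree {N : ℕ} (hN : Squarefree N) (hp : ¬ N.Prime)
    (h1 : 1 < N) : ∃ M K : ℕ, 1 < M ∧ 1 < K ∧ M.Coprime K ∧ M * K = N := by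
  have hK := Nat.minFac_prime h1.ne'
  obtain ⟨M, hM⟩ := Nat.minFac_dvd N
  refine ⟨M, N.minFac, ?_, hK.one_lt, (Nat.coprime_of_squarefree_mul (hM ▸ hN)).symm,
    by rw [mul_comm]; exact hM.symm⟩
  by_contra! hM1
  interval_cases M
  · omega
  · exact hp (by rwa [hM, mul_one])

theorem IsCyclic.of_squarefree_natCard {G : Type*} [CommGroup G] [Finite G]
    (hG : Squarefree (Nat.card G)) : IsCyclic G :=
  have := IsZGroup.of_squarefree hG
  inferInstance

theorem Nat.card_multiplicative_zmod (n : ℕ) : Nat.card (Multiplicative (ZMod n)) = n := by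
  rw [Nat.card_congr Multiplicative.toAdd, Nat.card_zmod]

theorem not_isDRRDetecting_of_isCyclic {R : Type*} [Group R] [IsCyclic R] {M K : ℕ} (hM : 1 < M)
    (hK : 1 < K) (hMK : M.Coprime K) (hR : Nat.card R = M * K) : ¬ IsDRRDetecting R := by
  have : Fact (1 < M) := ⟨hM⟩
  have : Fact (1 < K) := ⟨hK⟩
  have hcard :
      (Nat.card (Multiplicative (ZMod M))).Coprime (Nat.card (Multiplicative (ZMod K))) := by
    simpa only [Nat.card_multiplicative_zmod] using hMK
  have : IsCyclic (Multiplicative (ZMod M) × Multiplicative (ZMod K)) :=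
    Group.isCyclic_prod_iff.mpr ⟨inferInstance, inferInstance, hcard⟩
  let e : R ≃* Multiplicative (ZMod M) × Multiplicative (ZMod K) :=
    mulEquivOfCyclicCardEq <| by
      rw [hR, Nat.card_prod, Nat.card_multiplicative_zmod, Nat.card_multiplicative_zmod]
  exact fun h => not_isDRRDetecting_prod_of_isCyclic hcard (h.of_mulEquiv e.symm)

/-- a group of squarefree order that is abelian of composite order, or
isomorphic to `D_{2r} × C_q` with `r ∈ {3,5}` and `q` a prime not dividing `2r`,
is not DRR-detecting. -/
theorem stmt17 {R : Type*} [Group R] [Finite R] (hsf : Squarefree (Nat.card R))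
    (hcase :
      ((∀ a b : R, a * b = b * a) ∧ ¬ (Nat.card R).Prime ∧ 1 < Nat.card R) ∨
      (∃ n q : ℕ, (n = 3 ∨ n = 5) ∧ q.Prime ∧ ¬ q ∣ 2 * n ∧
        Nonempty (R ≃* DihedralGroup n × Multiplicative (ZMod q)))) :
    ∃ S : Set R,
      (∀ φ : MulAut R, φ '' S = S → φ = 1) ∧
      ∃ f : Equiv.Perm R,
        (∀ x y : R, x * y⁻¹ ∈ S ↔ f x * (f y)⁻¹ ∈ S) ∧
        ¬ ∃ r : R, ∀ v, f v = v * r := by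
  suffices h : ¬ IsDRRDetecting R by
    simpa only [IsDRRDetecting, HasTrivialAutStabilizer, IsCayleyAut, not_forall,
      Classical.not_imp, exists_prop] using h
  rcases hcase with ⟨hcomm, hnp, hlt⟩ | ⟨n, q, hn, hq, hqn, ⟨e⟩⟩
  · let _ : CommGroup R := { mul_comm := hcomm }
    have := IsCyclic.of_squarefree_natCard hsf
    obtain ⟨M, K, hM, hK, hMK, hN⟩ := Nat.exists_coprime_mul_eq_of_squarefree hsf hnp hlt
    exact not_isDRRDetecting_of_isCyclic hM hK hMK hN.symm
  · have := Fact.mk hq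
    have hn2 : n ≠ 2 := by omega
    refine fun h => not_isDRRDetecting_dihedralGroup_prod hn2 ?_ (h.of_mulEquiv e.symm)
    rw [Nat.card_multiplicative_zmod]
    exact Nat.coprime_comm.mp ((Nat.Prime.coprime_iff_not_dvd hq).mpr hqn)
end
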